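/- arXiv:1505.01504 — 4 statements merged into one kernel-verified Lean document; each statement's English description precedes it below -/
import Mathlib

section
/- Let K be a positive integer and let α be a real number with 0 < α ≤ 1/2. Then the FOFE encoding map over a vocabulary of size K is injective on the set of all finite sequences: for any two finite sequences w = (w_1,…,w_T) and w' = (w'_1,…,w'_{T'}) of elements of Fin K (of possibly different lengths), if their FOFE codes in ℝ^K are equal, then T = T' and w_t = w'_t for all t. (Theorem 1 of the paper.) -/
/-- The FOFE code of a word sequence `w = (w_1, …, w_T)` over the vocabulary `Fin K`
with forgetting factor `α`: `z_0 = 0`, `z_t = α • z_{t-1} + e_{w_t}`. -/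
def fofe {K : ℕ} (α : ℝ) (w : List (Fin K)) : Fin K → ℝ :=
  w.foldl (fun z a => α • z + Pi.single a (1 : ℝ)) 0

lemma fofe_concat {K : ℕ} (α : ℝ) (w : List (Fin K)) (a : Fin K) :
    fofe α (w ++ [a]) = α • fofe α w + Pi.single a (1 : ℝ) := by
  simp [fofe, List.foldl_append]

lemma fofe_nonneg {K : ℕ} {α : ℝ} (hα0 : 0 ≤ α) (w : List (Fin K)) (j : Fin K) :
    0 ≤ fofe α w j := by
  induction w using List.reverseRecOn with
  | nil => simp [fofe]
  | append_singleton w a ih =>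
    rw [fofe_concat]
    have : (0:ℝ) ≤ (Pi.single a (1:ℝ) : Fin K → ℝ) j := by
      rcases eq_or_ne j a with rfl | hne <;> simp [Pi.single_eq_of_ne, *]
    have := mul_nonneg hα0 ih
    simp only [Pi.add_apply, Pi.smul_apply, smul_eq_mul]
    linarith

lemma fofe_lt_two {K : ℕ} {α : ℝ} (hα0 : 0 < α) (hα : α ≤ 1 / 2)
    (w : List (Fin K)) (j : Fin K) : fofe α w j < 2 := by
  induction w using List.reverseRecOn with
  | nil => simp [fofe]
  | append_singleton w a ih =>
    rw [fofe_concat]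
    have h1 : α * fofe α w j < α * 2 := by
      exact mul_lt_mul_of_pos_left ih hα0
    have h2 : (Pi.single a (1:ℝ) : Fin K → ℝ) j ≤ 1 := by
      rcases eq_or_ne j a with rfl | hne <;> simp [Pi.single_eq_of_ne, *]
    simp only [Pi.add_apply, Pi.smul_apply, smul_eq_mul]
    nlinarith

lemma fofe_last_ge_one {K : ℕ} {α : ℝ} (hα0 : 0 ≤ α) (w : List (Fin K)) (a : Fin K) :
    1 ≤ fofe α (w ++ [a]) a := by
  rw [fofe_concat]
  have := mul_nonneg hα0 (fofe_nonneg hα0 w a)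
  simp only [Pi.add_apply, Pi.smul_apply, smul_eq_mul, Pi.single_eq_same]
  linarith

lemma fofe_ne_last_lt_one {K : ℕ} {α : ℝ} (hα0 : 0 < α) (hα : α ≤ 1 / 2)
    (w : List (Fin K)) (a j : Fin K) (hj : j ≠ a) : fofe α (w ++ [a]) j < 1 := by
  rw [fofe_concat]
  have h1 : α * fofe α w j < α * 2 := mul_lt_mul_of_pos_left (fofe_lt_two hα0 hα w j) hα0
  simp only [Pi.add_apply, Pi.smul_apply, smul_eq_mul, Pi.single_eq_of_ne hj]
  nlinarith

/-- **Theorem 1.** For `0 < α ≤ 1/2`, the FOFE encoding is injective on all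
finite sequences over a vocabulary of size `K`. -/
theorem fofe_injective_of_le_half (K : ℕ) (hK : 0 < K) (α : ℝ)
    (hα0 : 0 < α) (hα : α ≤ 1 / 2) (w w' : List (Fin K))
    (h : fofe α w = fofe α w') : w = w' := by
  induction w using List.reverseRecOn generalizing w' with
  | nil =>
    induction w' using List.reverseRecOn with
    | nil => rfl
    | append_singleton w' b _ =>
      exfalso
      have h1 := fofe_last_ge_one hα0.le w' b
      have h0 : fofe α ([] : List (Fin K)) b = 0 := by simp [fofe]
      rw [← h, h0] at h1
      linarith
  | append_singleton w a ih =>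
    induction w' using List.reverseRecOn with
    | nil =>
      exfalso
      have h1 := fofe_last_ge_one hα0.le w a
      have h0 : fofe α ([] : List (Fin K)) a = 0 := by simp [fofe]
      rw [h, h0] at h1
      linarith
    | append_singleton w' b _ =>
      have hab : a = b := by
        by_contra hne
        have h1 := fofe_last_ge_one hα0.le w a
        have h2 := fofe_ne_last_lt_one hα0 hα w' b a hne
        rw [h] at h1
        linarith
      subst hab
      have key : fofe α w = fofe α w' := by
        funext j
        have := congrFun h j
        rw [fofe_concat, fofe_concat] at this
        simp only [Pi.add_apply, Pi.smul_apply, smul_eq_mul] at this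
        have : α * fofe α w j = α * fofe α w' j := by linarith
        exact mul_left_cancel₀ hα0.ne' this
      rw [ih w' key]
end

section
/- Let K and T be positive integers. Then the set of real numbers α with 1/2 < α < 1 for which the FOFE encoding map over a vocabulary of size K fails to be injective on the set of sequences of length at most T is a finite set. (Theorem 2 of the paper: FOFE is unique for all α in (0.5, 1.0) except a finite set of isolated values of α.) -/
/-!
Coordinate `j` of `fofe α w` is a polynomial in `α` whose coefficient of `α ^ n` is `1` if the
`n`-th word from the end of `w` is `j` and `0` otherwise. Reading off the constant term and
dividing by `X` recovers `w` from this vector of polynomials, so two distinct sequences give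
distinct polynomial vectors, which agree at only finitely many `α`; and there are only finitely
many pairs of sequences of length at most `T`.
-/

open Polynomial

section fofePoly

variable {K : ℕ}

theorem fofe_append_singleton (α : ℝ) (w : List (Fin K)) (a : Fin K) :
    fofe α (w ++ [a]) = α • fofe α w + Pi.single a 1 := by
  simp [fofe, List.foldl_append]

noncomputable def fofePoly (w : List (Fin K)) : Fin K → ℝ[X] :=
  w.foldl (fun z a => (X : ℝ[X]) • z + Pi.single a 1) 0

@[simp]
theorem fofePoly_nil : fofePoly ([] : List (Fin K)) = 0 := by
  simp [fofePoly]

theorem fofePoly_append_singleton (w : List (Fin K)) (a : Fin K) :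
    fofePoly (w ++ [a]) = (X : ℝ[X]) • fofePoly w + Pi.single a 1 := by
  simp [fofePoly, List.foldl_append]

theorem coeff_zero_fofePoly_append_singleton (w : List (Fin K)) (a j : Fin K) :
    (fofePoly (w ++ [a]) j).coeff 0 = if j = a then 1 else 0 := by
  by_cases h : j = a <;> simp [fofePoly_append_singleton, coeff_one, h]

theorem divX_fofePoly_append_singleton (w : List (Fin K)) (a j : Fin K) :
    (fofePoly (w ++ [a]) j).divX = fofePoly w j := by
  ext n
  by_cases h : j = a <;> simp [fofePoly_append_singleton, coeff_one, h]

theorem eval_fofePoly (α : ℝ) (w : List (Fin K)) (j : Fin K) :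
    (fofePoly w j).eval α = fofe α w j := by
  induction w using List.reverseRecOn with
  | nil => simp [fofe]
  | append_singleton w a ih =>
    rcases eq_or_ne j a with rfl | h <;>
      simp [fofePoly_append_singleton, fofe_append_singleton, *]

theorem fofePoly_eq_zero_iff {w : List (Fin K)} : fofePoly w = 0 ↔ w = [] := by
  refine ⟨fun h => ?_, fun h => h ▸ fofePoly_nil⟩
  obtain rfl | ⟨v, a, rfl⟩ := w.eq_nil_or_concat'
  · rfl
  · simpa [coeff_zero_fofePoly_append_singleton] using congr_arg (fun z => (z a).coeff 0) h

theorem fofePoly_injective : Function.Injective (fofePoly (K := K)) := by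
  intro w
  induction w using List.reverseRecOn with
  | nil => exact fun w' h => (fofePoly_eq_zero_iff.mp (h.symm.trans fofePoly_nil)).symm
  | append_singleton w a ih =>
    intro w' h
    obtain rfl | ⟨v', a', rfl⟩ := w'.eq_nil_or_concat'
    · exact fofePoly_eq_zero_iff.mp h
    have ha : a = a' := by
      simpa [coeff_zero_fofePoly_append_singleton] using congr_arg (fun z => (z a).coeff 0) h
    have hw : fofePoly w = fofePoly v' := by
      ext1 j
      simpa [divX_fofePoly_append_singleton] using congr_arg (fun z => (z j).divX) h
    rw [ih hw, ha]

end fofePoly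

theorem finite_setOf_fofe_eq {K : ℕ} {w w' : List (Fin K)} (h : w ≠ w') :
    {α : ℝ | fofe α w = fofe α w'}.Finite := by
  obtain ⟨j, hj⟩ := Function.ne_iff.mp (fofePoly_injective.ne h)
  refine (finite_setOfPred_isRoot (sub_ne_zero.mpr hj)).subset fun α hα => ?_
  simp [eval_fofePoly, congrFun hα j]

theorem fofe_bad_alphas_finite_general (K T : ℕ) :
    {α : ℝ | 1 / 2 < α ∧ α < 1 ∧
      ∃ w w' : List (Fin K), w.length ≤ T ∧ w'.length ≤ T ∧
        fofe α w = fofe α w' ∧ w ≠ w'}.Finite := by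
  set pairs := {p : List (Fin K) × List (Fin K) | p.1.length ≤ T ∧ p.2.length ≤ T ∧ p.1 ≠ p.2}
  have pairs_finite : pairs.Finite :=
    ((List.finite_length_le _ T).prod (List.finite_length_le _ T)).subset
      fun p hp => ⟨hp.1, hp.2.1⟩
  refine (pairs_finite.biUnion' fun p hp => finite_setOf_fofe_eq hp.2.2).subset ?_
  rintro α ⟨-, -, w, w', hw, hw', heq, hne⟩
  exact Set.mem_biUnion (x := (w, w')) ⟨hw, hw', hne⟩ heq

/-- **Theorem 2.** For positive `K` and `T`, the set of `α ∈ (1/2, 1)` at which the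
FOFE encoding fails to be injective on sequences of length at most `T` is finite. -/
theorem fofe_bad_alphas_finite (K T : ℕ) (hK : 0 < K) (hT : 0 < T) :
    {α : ℝ | 1 / 2 < α ∧ α < 1 ∧
      ∃ w w' : List (Fin K), w.length ≤ T ∧ w'.length ≤ T ∧
        fofe α w = fofe α w' ∧ w ≠ w'}.Finite :=
  fofe_bad_alphas_finite_general K T
end

section
/- Let K and T be positive integers and let α ∈ ℝ. If there exist two distinct sequences over Fin K, each of length at most T, whose FOFE codes with forgetting factor α are equal, then there exists a nonzero polynomial p ∈ ℝ[X] of degree at most T−1, all of whose coefficients lie in {−1, 0, 1}, such that p(α) = 0. (Collisions of FOFE codes force α to be a root of one of finitely many nonzero polynomials with coefficients in {−1,0,1}; this is the reduction used in the proof of Theorem 2.) -/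
open Polynomial

/-- Polynomial version of the FOFE code. -/
noncomputable def fofeP {K : ℕ} : List (Fin K) → Fin K → Polynomial ℝ
  | [] => 0
  | a :: s => fun j => monomial s.length (if j = a then (1:ℝ) else 0) + fofeP s j

lemma fofe_foldl {K : ℕ} (α : ℝ) (w : List (Fin K)) (z : Fin K → ℝ) :
    w.foldl (fun z a => α • z + Pi.single a (1:ℝ)) z
      = α ^ w.length • z + fofe α w := by
  induction w generalizing z with
  | nil => simp [fofe]
  | cons a s ih =>
    show List.foldl _ (α • z + Pi.single a 1) s = _
    rw [ih]
    have h2 : fofe α (a :: s)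
        = List.foldl (fun z a => α • z + Pi.single a (1:ℝ))
            (Pi.single a (1:ℝ) : Fin K → ℝ) s := by
      simp [fofe]
    rw [h2, ih (Pi.single a (1:ℝ) : Fin K → ℝ)]
    simp only [smul_add, smul_smul, List.length_cons, pow_succ]
    rw [mul_comm]
    abel

lemma fofe_cons {K : ℕ} (α : ℝ) (a : Fin K) (s : List (Fin K)) :
    fofe α (a :: s)
      = α ^ s.length • (Pi.single a (1:ℝ) : Fin K → ℝ) + fofe α s := by
  have h2 : fofe α (a :: s)
      = List.foldl (fun z a => α • z + Pi.single a (1:ℝ))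
          (Pi.single a (1:ℝ) : Fin K → ℝ) s := by
    simp [fofe]
  rw [h2, fofe_foldl]

lemma eval_fofeP {K : ℕ} (α : ℝ) (w : List (Fin K)) (j : Fin K) :
    (fofeP w j).eval α = fofe α w j := by
  induction w with
  | nil => simp [fofeP, fofe]
  | cons a s ih =>
    rw [fofe_cons]
    simp [fofeP, ih, Pi.single_apply, mul_comm]

lemma coeff_fofeP_eq_zero {K : ℕ} (w : List (Fin K)) (j : Fin K) (n : ℕ)
    (hn : w.length ≤ n) : (fofeP w j).coeff n = 0 := by
  induction w generalizing n with
  | nil => simp [fofeP]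
  | cons a s ih =>
    simp only [List.length_cons] at hn
    simp only [fofeP, coeff_add, coeff_monomial]
    rw [if_neg (by omega), ih n (by omega), add_zero]

lemma coeff_fofeP_mem {K : ℕ} (w : List (Fin K)) (j : Fin K) (n : ℕ) :
    (fofeP w j).coeff n = 0 ∨ (fofeP w j).coeff n = 1 := by
  induction w generalizing n with
  | nil => left; simp [fofeP]
  | cons a s ih =>
    simp only [fofeP, coeff_add, coeff_monomial]
    rcases eq_or_ne s.length n with h | h
    · rw [if_pos h, coeff_fofeP_eq_zero s j n (by omega), add_zero]
      split <;> simp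
    · rw [if_neg h, zero_add]; exact ih n

lemma fofeP_injective {K : ℕ} : ∀ (w w' : List (Fin K)),
    (∀ j, fofeP w j = fofeP w' j) → w = w' := by
  intro w
  induction w with
  | nil =>
    intro w' h
    cases w' with
    | nil => rfl
    | cons a' s' =>
      exfalso
      have := congrArg (fun p => p.coeff s'.length) (h a')
      simp only [fofeP, coeff_add, coeff_monomial, Pi.zero_apply, coeff_zero] at this
      rw [coeff_fofeP_eq_zero s' a' s'.length le_rfl] at this
      simp at this
  | cons a s ih =>
    intro w' h
    cases w' with
    | nil =>
      exfalso
      have := congrArg (fun p => p.coeff s.length) (h a)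
      simp only [fofeP, coeff_add, coeff_monomial, Pi.zero_apply, coeff_zero] at this
      rw [coeff_fofeP_eq_zero s a s.length le_rfl] at this
      simp at this
    | cons a' s' =>
      -- first: lengths agree
      have hlen : s.length = s'.length := by
        by_contra hne
        rcases Nat.lt_or_ge s'.length s.length with hlt | hge
        · have := congrArg (fun p => p.coeff s.length) (h a)
          simp only [fofeP, coeff_add, coeff_monomial] at this
          rw [coeff_fofeP_eq_zero s a s.length le_rfl,
            coeff_fofeP_eq_zero s' a s.length (by omega)] at this
          simp [show s'.length ≠ s.length from fun hx => hne hx.symm] at this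
        · have hlt : s.length < s'.length := by omega
          have := congrArg (fun p => p.coeff s'.length) (h a')
          simp only [fofeP, coeff_add, coeff_monomial] at this
          rw [coeff_fofeP_eq_zero s a' s'.length (by omega),
            coeff_fofeP_eq_zero s' a' s'.length le_rfl] at this
          simp [hne] at this
      -- next: heads agree
      have hhead : a = a' := by
        by_contra hne
        have := congrArg (fun p => p.coeff s.length) (h a)
        simp only [fofeP, coeff_add, coeff_monomial] at this
        rw [coeff_fofeP_eq_zero s a s.length le_rfl,
          coeff_fofeP_eq_zero s' a s.length (by omega)] at this
        simp [hlen, hne] at this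
      -- tails agree
      have htail : ∀ j, fofeP s j = fofeP s' j := by
        intro j
        have := h j
        simp only [fofeP, hlen, hhead] at this
        exact add_left_cancel this
      rw [hhead, ih s' htail]

/-- A collision of FOFE codes of two distinct sequences of length at most `T`
forces `α` to be a root of a nonzero polynomial of degree at most `T - 1`
with coefficients in `{-1, 0, 1}`. -/
theorem fofe_collision_imp_root (K T : ℕ) (hK : 0 < K) (hT : 0 < T) (α : ℝ)
    (w w' : List (Fin K)) (hw : w.length ≤ T) (hw' : w'.length ≤ T)
    (hne : w ≠ w') (heq : fofe α w = fofe α w') :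
    ∃ p : Polynomial ℝ, p ≠ 0 ∧ p.natDegree ≤ T - 1 ∧
      (∀ n, p.coeff n ∈ ({-1, 0, 1} : Set ℝ)) ∧ p.eval α = 0 := by
  have hj : ∃ j, fofeP w j ≠ fofeP w' j := by
    by_contra hc
    push_neg at hc
    exact hne (fofeP_injective w w' hc)
  obtain ⟨j, hj⟩ := hj
  refine ⟨fofeP w j - fofeP w' j, sub_ne_zero.mpr hj, ?_, ?_, ?_⟩
  · rw [Polynomial.natDegree_le_iff_coeff_eq_zero]
    intro m hm
    have hmT : T ≤ m := by omega
    rw [coeff_sub, coeff_fofeP_eq_zero w j m (by omega),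
      coeff_fofeP_eq_zero w' j m (by omega), sub_zero]
  · intro n
    rw [coeff_sub]
    rcases coeff_fofeP_mem w j n with h1 | h1 <;>
      rcases coeff_fofeP_mem w' j n with h2 | h2 <;>
      rw [h1, h2] <;> norm_num
  · rw [eval_sub, eval_fofeP, eval_fofeP, heq, sub_self]
end

section
/- Let K and T be positive integers and let α be a real number with 0 < α < 1. Suppose that no nonzero polynomial p ∈ ℝ[X] of degree at most T−1 with all coefficients in {−1, 0, 1} satisfies p(α) = 0. Then the FOFE encoding map with forgetting factor α over the vocabulary Fin K is injective on the set of all sequences of length at most T. (Sufficient condition for unique decodability of FOFE codes.) -/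
open Polynomial

section OccurrencePoly

variable (R : Type*) [Semiring R] {ι : Type*} [DecidableEq ι]

noncomputable def occurrencePoly (j : ι) : List ι → R[X]
  | [] => 0
  | a :: v => C (if j = a then 1 else 0) + X * occurrencePoly j v

variable {R}

theorem coeff_occurrencePoly (j : ι) (v : List ι) (n : ℕ) :
    (occurrencePoly R j v).coeff n = if v[n]? = some j then 1 else 0 := by
  induction v generalizing n with
  | nil => simp [occurrencePoly]
  | cons a v ih =>
    cases n with
    | zero => simp only [occurrencePoly, coeff_add, coeff_C_zero, coeff_X_mul_zero]; simp [eq_comm]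
    | succ n => simp only [occurrencePoly, coeff_add, coeff_C_succ, coeff_X_mul, ih]; simp

theorem natDegree_occurrencePoly_le (j : ι) {v : List ι} {n : ℕ} (hv : v.length ≤ n) :
    (occurrencePoly R j v).natDegree ≤ n - 1 := by
  refine natDegree_le_iff_coeff_eq_zero.mpr fun m hm => ?_
  rw [coeff_occurrencePoly, List.getElem?_eq_none (by omega)]
  simp

theorem List.eq_of_forall_occurrencePoly_eq [Nontrivial R] {v v' : List ι}
    (h : ∀ j, occurrencePoly R j v = occurrencePoly R j v') : v = v' := by
  refine List.ext_getElem? fun n => Option.ext fun j => ?_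
  have hcoeff := congrArg (coeff · n) (h j)
  simp only [coeff_occurrencePoly] at hcoeff
  split_ifs at hcoeff <;> simp_all

end OccurrencePoly

theorem coeff_sub_occurrencePoly_mem {R ι : Type*} [Ring R] [DecidableEq ι] (j : ι)
    (v v' : List ι) (n : ℕ) :
    (occurrencePoly R j v - occurrencePoly R j v').coeff n ∈ ({-1, 0, 1} : Set R) := by
  rw [coeff_sub, coeff_occurrencePoly, coeff_occurrencePoly]
  split_ifs <;> simp

theorem fofe_apply_eq_eval {K : ℕ} (α : ℝ) (w : List (Fin K)) (j : Fin K) :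
    fofe α w j = (occurrencePoly ℝ j w.reverse).eval α := by
  rw [fofe, List.foldl_eq_foldr_reverse]
  induction w.reverse with
  | nil => simp [occurrencePoly]
  | cons a v ih =>
    rw [List.foldr_cons, occurrencePoly, eval_add, eval_C, eval_mul, eval_X, ← ih]
    simp [Pi.single_apply, add_comm]

theorem fofe_injective_of_not_root_general (K T : ℕ) (α : ℝ)
    (hroot : ¬ ∃ p : Polynomial ℝ, p ≠ 0 ∧ p.natDegree ≤ T - 1 ∧
      (∀ n, p.coeff n ∈ ({-1, 0, 1} : Set ℝ)) ∧ p.eval α = 0) :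
    ∀ w w' : List (Fin K), w.length ≤ T → w'.length ≤ T →
      fofe α w = fofe α w' → w = w' := by
  intro w w' hw hw' heq
  suffices ∀ j, occurrencePoly ℝ j w.reverse = occurrencePoly ℝ j w'.reverse from
    List.reverse_injective (List.eq_of_forall_occurrencePoly_eq this)
  intro j
  by_contra hne
  have hdeg : (occurrencePoly ℝ j w.reverse - occurrencePoly ℝ j w'.reverse).natDegree ≤ T - 1 :=
    (natDegree_sub_le_of_le (natDegree_occurrencePoly_le j (by simpa using hw))
      (natDegree_occurrencePoly_le j (by simpa using hw'))).trans (max_self _).le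
  refine hroot ⟨_, sub_ne_zero.mpr hne, hdeg, coeff_sub_occurrencePoly_mem j _ _, ?_⟩
  rw [eval_sub, ← fofe_apply_eq_eval, ← fofe_apply_eq_eval, heq, sub_self]

/-- If `α ∈ (0, 1)` is not a root of any nonzero polynomial of degree at most
`T - 1` with coefficients in `{-1, 0, 1}`, then the FOFE encoding with forgetting
factor `α` is injective on sequences over `Fin K` of length at most `T`. -/
theorem fofe_injective_of_not_root (K T : ℕ) (hK : 0 < K) (hT : 0 < T) (α : ℝ)
    (hα0 : 0 < α) (hα1 : α < 1)
    (hroot : ¬ ∃ p : Polynomial ℝ, p ≠ 0 ∧ p.natDegree ≤ T - 1 ∧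
      (∀ n, p.coeff n ∈ ({-1, 0, 1} : Set ℝ)) ∧ p.eval α = 0) :
    ∀ w w' : List (Fin K), w.length ≤ T → w'.length ≤ T →
      fofe α w = fofe α w' → w = w' :=
  fofe_injective_of_not_root_general K T α hroot
end
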